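/- The enhanced quotient graph 𝒢_H(G) is a complete graph if and only if the quotient group G/H is cyclic. -/

import Mathlib

/-- The enhanced power graph of a group `K`: distinct `x, y` are adjacent iff
`x, y ∈ ⟨z⟩` for some `z ∈ K`. -/
def enhancedPowerGraph (K : Type*) [Group K] : SimpleGraph K where
  Adj x y := x ≠ y ∧ ∃ z : K, x ∈ Subgroup.zpowers z ∧ y ∈ Subgroup.zpowers z
  symm := by
    refine ⟨?_⟩
    rintro x y ⟨hxy, z, hx, hy⟩
    exact ⟨hxy.symm, z, hy, hx⟩
  loopless := by refine ⟨?_⟩; rintro x ⟨hx, -⟩; exact hx rfl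

/-- The enhanced quotient graph `𝒢_H(G)`: vertex set `(G \ H) ∪ {e}`, and distinct
vertices `x, y` are adjacent iff `xH = yH` or `xH, yH ∈ ⟨zH⟩` for some `z ∈ G`. -/
def enhancedQuotientGraph (G : Type*) [Group G] (H : Subgroup G) [H.Normal] :
    SimpleGraph {x : G // x ∉ H ∨ x = 1} where
  Adj a b := a ≠ b ∧
    ((QuotientGroup.mk (a : G) : G ⧸ H) = QuotientGroup.mk (b : G) ∨
      ∃ z : G, (QuotientGroup.mk (a : G) : G ⧸ H) ∈
          Subgroup.zpowers (QuotientGroup.mk z) ∧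
        (QuotientGroup.mk (b : G) : G ⧸ H) ∈ Subgroup.zpowers (QuotientGroup.mk z))
  symm := by
    refine ⟨?_⟩
    rintro a b ⟨hab, h | ⟨z, hz1, hz2⟩⟩
    · exact ⟨hab.symm, Or.inl h.symm⟩
    · exact ⟨hab.symm, Or.inr ⟨z, hz2, hz1⟩⟩
  loopless := by refine ⟨?_⟩; rintro a ⟨ha, -⟩; exact ha rfl

lemma isCyclic_of_pairwise {K : Type*} [Group K] [Finite K]
    (h : ∀ x y : K, ∃ z : K, x ∈ Subgroup.zpowers z ∧ y ∈ Subgroup.zpowers z) :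
    IsCyclic K := by
  cases nonempty_fintype K
  obtain ⟨z, -, hz⟩ := Finset.exists_max_image (Finset.univ : Finset K) orderOf ⟨1, Finset.mem_univ 1⟩
  refine ⟨z, fun x => ?_⟩
  obtain ⟨w, hx, hzw⟩ := h x z
  have h1 : Subgroup.zpowers z ≤ Subgroup.zpowers w := Subgroup.zpowers_le.2 hzw
  have h2 : orderOf w ≤ orderOf z := hz w (Finset.mem_univ w)
  have h3 : Subgroup.zpowers z = Subgroup.zpowers w := by
    refine Subgroup.eq_of_le_of_card_ge h1 ?_
    rwa [Nat.card_zpowers, Nat.card_zpowers]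
  exact Subgroup.mem_zpowers_iff.mp (h3 ▸ hx)

/-- `𝒢_H(G)` is complete iff `G/H` is cyclic. -/
theorem enhancedQuotientGraph_eq_top_iff {G : Type*} [Group G] [Fintype G]
    (H : Subgroup G) [H.Normal] :
    enhancedQuotientGraph G H = ⊤ ↔ IsCyclic (G ⧸ H) := by
  constructor
  · intro h
    have hrep : ∀ q : G ⧸ H, ∃ a : {x : G // x ∉ H ∨ x = 1},
        (QuotientGroup.mk (a : G) : G ⧸ H) = q := by
      intro q
      induction q using QuotientGroup.induction_on with
      | H g =>
        by_cases hg : g ∈ H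
        · exact ⟨⟨1, Or.inr rfl⟩, by simp [(QuotientGroup.eq_one_iff g).2 hg]⟩
        · exact ⟨⟨g, Or.inl hg⟩, rfl⟩
    refine isCyclic_of_pairwise fun u v => ?_
    obtain ⟨a, ha⟩ := hrep u
    obtain ⟨b, hb⟩ := hrep v
    by_cases hab : a = b
    · subst hab
      have huv : u = v := by rw [← ha, hb]
      subst huv
      exact ⟨u, Subgroup.mem_zpowers u, Subgroup.mem_zpowers u⟩
    · have hadj : (enhancedQuotientGraph G H).Adj a b := by rw [h]; exact hab
      rcases hadj.2 with heq | ⟨z, hz1, hz2⟩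
      · refine ⟨u, ha ▸ Subgroup.mem_zpowers _, ?_⟩
        rw [← hb, ← heq, ha]; exact Subgroup.mem_zpowers _
      · exact ⟨QuotientGroup.mk z, ha ▸ hz1, hb ▸ hz2⟩
  · rintro ⟨g, hg⟩
    obtain ⟨z, hz⟩ := QuotientGroup.mk_surjective g
    ext a b
    simp only [SimpleGraph.top_adj]
    constructor
    · exact fun hadj => hadj.1
    · intro hab
      refine ⟨hab, Or.inr ⟨z, ?_, ?_⟩⟩ <;> rw [hz] <;> exact hg _
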